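/- Let (M, Q) be a measurable space with a probability measure Q, let d : M × M → [0,∞] be measurable and symmetric, and define the iterated kernels D_1 := d and D_{n+1}(p,q) := ∫_M D_n(p,r) d(r,q) Q(dr). Assume there exist a measurable set A ⊆ M with Q(A) > 0 and a point p₀ ∈ M such that d(p,q) ≥ d(p,p₀) holds for Q⊗Q-almost every (p,q) ∈ M × A (i.e. almost every pair with q ∈ A), and such that for Q-almost every q ∈ M there exists n ≥ 1 with D_n(p₀,q) > 0. Then for Q⊗Q-almost every (p,q) ∈ M² there exists n ≥ 2 with D_n(p,q) > 0. -/

import Mathlib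

/-!
Write `K k = DIterAux Q d k = D_{k+1}`. The minorization propagates along the iterates:
for a.e. `p` and every `k`, `K k p p₀ ≤ K k p s` for a.e. `s ∈ A`, so
`K k p p₀ * Q A ≤ ∫_A K k p`, and irreducibility from `p₀` together with symmetry makes the
right-hand side positive for some `k`. Moreover `∫_A K k p s * d s u ≥ (∫_A K k p) * d p₀ u`,
so Chapman–Kolmogorov through the middle point `u` gives
`K (k + m + 3) p q ≥ (∫_A K k p) * (∫_A K m q) * ∫ d(p₀, u)² Q(du)`. The last integral is
positive, since otherwise `d(p₀, ·)` and hence every iterate from `p₀` would vanish a.e.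
-/

open MeasureTheory
open scoped ENNReal

/-- Auxiliary iterated mark kernels: `DIterAux Q d k = D_{k+1}`, where
`D_{n+1}(p,q) = ∫_M D_n(p,r) d(r,q) Q(dr)`. -/
noncomputable def DIterAux {M : Type*} [MeasurableSpace M] (Q : Measure M)
    (d : M → M → ℝ≥0∞) : ℕ → M → M → ℝ≥0∞
  | 0 => d
  | n + 1 => fun p q => ∫⁻ r, DIterAux Q d n p r * d r q ∂Q

/-- `DN Q d n = D_n` (meaningful for `n ≥ 1`): `D_1 = d`. -/
noncomputable def DN {M : Type*} [MeasurableSpace M] (Q : Measure M)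
    (d : M → M → ℝ≥0∞) (n : ℕ) : M → M → ℝ≥0∞ :=
  DIterAux Q d (n - 1)

open Function

section

variable {M : Type*} [MeasurableSpace M] {Q : Measure M} {d : M → M → ℝ≥0∞}

theorem measurable_DIterAux [SFinite Q] (hd : Measurable (uncurry d)) (n : ℕ) :
    Measurable (uncurry (DIterAux Q d n)) := by
  induction n with
  | zero => exact hd
  | succ n ih =>
    exact ((ih.comp (measurable_fst.fst.prodMk measurable_snd)).mul
      (hd.comp (measurable_snd.prodMk measurable_fst.snd))).lintegral_prod_right'

theorem DIterAux_add_add_one [SFinite Q] (hd : Measurable (uncurry d)) (a b : ℕ) (p q : M) :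
    DIterAux Q d (a + b + 1) p q = ∫⁻ r, DIterAux Q d a p r * DIterAux Q d b r q ∂Q := by
  induction b generalizing q with
  | zero => rfl
  | succ b ih =>
    have hKa := measurable_DIterAux (Q := Q) hd a
    have hKb := measurable_DIterAux (Q := Q) hd b
    calc DIterAux Q d (a + (b + 1) + 1) p q
        = ∫⁻ s, (∫⁻ r, DIterAux Q d a p r * DIterAux Q d b r s ∂Q) * d s q ∂Q := by
          simp only [← ih]; rfl
      _ = ∫⁻ s, ∫⁻ r, DIterAux Q d a p r * DIterAux Q d b r s * d s q ∂Q ∂Q :=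
          lintegral_congr fun s =>
            (lintegral_mul_const _ (hKa.of_uncurry_left.mul hKb.of_uncurry_right)).symm
      _ = ∫⁻ r, ∫⁻ s, DIterAux Q d a p r * DIterAux Q d b r s * d s q ∂Q ∂Q :=
          lintegral_lintegral_swap (((hKa.of_uncurry_left.comp measurable_snd).mul
            (hKb.comp measurable_swap)).mul (hd.of_uncurry_right.comp measurable_fst)).aemeasurable
      _ = ∫⁻ r, DIterAux Q d a p r * DIterAux Q d (b + 1) r q ∂Q := by
          refine lintegral_congr fun r => ?_
          change _ = DIterAux Q d a p r * ∫⁻ s, DIterAux Q d b r s * d s q ∂Q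
          rw [← lintegral_const_mul _ (f := fun s => DIterAux Q d b r s * d s q)
            (hKb.of_uncurry_left.mul hd.of_uncurry_right)]
          simp only [mul_assoc]

theorem DIterAux_comm [SFinite Q] (hd : Measurable (uncurry d)) (hsymm : ∀ p q, d p q = d q p)
    (n : ℕ) (p q : M) : DIterAux Q d n p q = DIterAux Q d n q p := by
  induction n generalizing p q with
  | zero => exact hsymm p q
  | succ n ih =>
    have hCK := DIterAux_add_add_one (Q := Q) hd 0 n p q
    rw [zero_add] at hCK
    rw [hCK]
    exact lintegral_congr fun r => by rw [DIterAux, hsymm, ih, mul_comm]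

theorem ae_DIterAux_eq_zero {p : M} (h : ∀ᵐ u ∂Q, d p u = 0) (k : ℕ) :
    ∀ᵐ u ∂Q, DIterAux Q d k p u = 0 := by
  induction k with
  | zero => exact h
  | succ k ih =>
    refine .of_forall fun u => ?_
    have hzero : (fun r => DIterAux Q d k p r * d r u) =ᵐ[Q] 0 := by
      filter_upwards [ih] with r hr
      simp [hr]
    exact (lintegral_congr_ae hzero).trans lintegral_zero

theorem lintegral_mul_self_pos_of_ae_exists_DIterAux_pos [NeZero Q] {p : M}
    (hd : Measurable (d p)) (h : ∀ᵐ q ∂Q, ∃ k, 0 < DIterAux Q d k p q) :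
    0 < ∫⁻ u, d p u * d p u ∂Q := by
  refine pos_iff_ne_zero.2 fun h0 => ?_
  have hzero : ∀ᵐ u ∂Q, d p u = 0 := by
    filter_upwards [(lintegral_eq_zero_iff (hd.mul hd)).1 h0] with u hu
    exact mul_self_eq_zero.1 hu
  obtain ⟨u, ⟨k, hk⟩, hu⟩ := (h.and (ae_all_iff.2 (ae_DIterAux_eq_zero hzero))).exists
  exact hk.ne' (hu k)

variable {A : Set M} {p₀ : M}

theorem ae_DIterAux_le_of_minorization
    (hfib : ∀ᵐ p ∂Q, ∀ᵐ s ∂Q, s ∈ A → d p p₀ ≤ d p s)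
    (hswap : ∀ᵐ s ∂Q, ∀ᵐ r ∂Q, s ∈ A → d r p₀ ≤ d r s) :
    ∀ᵐ p ∂Q, ∀ k, ∀ᵐ s ∂Q, s ∈ A → DIterAux Q d k p p₀ ≤ DIterAux Q d k p s := by
  filter_upwards [hfib] with p hp k
  cases k with
  | zero => exact hp
  | succ k =>
    filter_upwards [hswap] with s hs hsA
    exact lintegral_mono_ae (hs.mono fun r hr => mul_le_mul_right (hr hsA) _)

theorem setLIntegral_mul_le_DIterAux_succ (hA : MeasurableSet A)
    (hsymm : ∀ p q, d p q = d q p) (hfib : ∀ᵐ u ∂Q, ∀ᵐ s ∂Q, s ∈ A → d u p₀ ≤ d u s)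
    (k : ℕ) (p : M) :
    ∀ᵐ u ∂Q, (∫⁻ s in A, DIterAux Q d k p s ∂Q) * d p₀ u ≤ DIterAux Q d (k + 1) p u := by
  filter_upwards [hfib] with u hu
  calc (∫⁻ s in A, DIterAux Q d k p s ∂Q) * d p₀ u
      ≤ ∫⁻ s in A, DIterAux Q d k p s * d p₀ u ∂Q := lintegral_mul_const_le _ _
    _ ≤ ∫⁻ s in A, DIterAux Q d k p s * d s u ∂Q := by
        refine setLIntegral_mono_ae' hA (hu.mono fun s hs hsA => ?_)
        rw [hsymm p₀, hsymm s]
        exact mul_le_mul_right (hs hsA) _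
    _ ≤ ∫⁻ s, DIterAux Q d k p s * d s u ∂Q := setLIntegral_le_lintegral _ _

theorem DIterAux_pos_of_setLIntegral_pos [SFinite Q] (hd : Measurable (uncurry d))
    (hsymm : ∀ p q, d p q = d q p) (hA : MeasurableSet A)
    (hfib : ∀ᵐ u ∂Q, ∀ᵐ s ∂Q, s ∈ A → d u p₀ ≤ d u s)
    (hsq : 0 < ∫⁻ u, d p₀ u * d p₀ u ∂Q) {p q : M} {k m : ℕ}
    (hp : 0 < ∫⁻ s in A, DIterAux Q d k p s ∂Q) (hq : 0 < ∫⁻ s in A, DIterAux Q d m q s ∂Q) :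
    0 < DIterAux Q d (k + m + 3) p q := by
  set a := ∫⁻ s in A, DIterAux Q d k p s ∂Q
  set b := ∫⁻ s in A, DIterAux Q d m q s ∂Q
  calc 0 < a * b * ∫⁻ u, d p₀ u * d p₀ u ∂Q :=
        ENNReal.mul_pos (mul_ne_zero hp.ne' hq.ne') hsq.ne'
    _ ≤ ∫⁻ u, a * b * (d p₀ u * d p₀ u) ∂Q := lintegral_const_mul_le _ _
    _ = ∫⁻ u, a * d p₀ u * (b * d p₀ u) ∂Q := lintegral_congr fun u => by ring
    _ ≤ ∫⁻ u, DIterAux Q d (k + 1) p u * DIterAux Q d (m + 1) u q ∂Q := by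
        refine lintegral_mono_ae ?_
        filter_upwards [setLIntegral_mul_le_DIterAux_succ hA hsymm hfib k p,
          setLIntegral_mul_le_DIterAux_succ hA hsymm hfib m q] with u hpu hqu
        exact mul_le_mul' hpu (hqu.trans_eq (DIterAux_comm hd hsymm _ q u))
    _ = DIterAux Q d (k + m + 3) p q := by
        rw [show k + m + 3 = k + 1 + (m + 1) + 1 by omega, DIterAux_add_add_one hd]

end

/-- Irreducibility under a minorization assumption: if `d(p,q) ≥ d(p,p₀)` for a.e. pair
with `q ∈ A` (where `Q(A) > 0`), and some iterate `D_n(p₀,q)` is positive for a.e. `q`,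
then for a.e. `(p,q)` some iterate `D_n(p,q)` with `n ≥ 2` is positive. -/
theorem irreducibility_from_minorization {M : Type*} [MeasurableSpace M]
    (Q : Measure M) [IsProbabilityMeasure Q]
    (d : M → M → ℝ≥0∞)
    (hmeas : Measurable fun pq : M × M => d pq.1 pq.2)
    (hsymm : ∀ p q, d p q = d q p)
    (A : Set M) (hA : MeasurableSet A) (hApos : 0 < Q A) (p₀ : M)
    (hmin : ∀ᵐ pq ∂(Q.prod Q), pq.2 ∈ A → d pq.1 p₀ ≤ d pq.1 pq.2)
    (hirr : ∀ᵐ q ∂Q, ∃ n : ℕ, 1 ≤ n ∧ 0 < DN Q d n p₀ q) :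
    ∀ᵐ pq ∂(Q.prod Q), ∃ n : ℕ, 2 ≤ n ∧ 0 < DN Q d n pq.1 pq.2 := by
  have hd : Measurable (uncurry d) := hmeas
  have hfib : ∀ᵐ p ∂Q, ∀ᵐ s ∂Q, s ∈ A → d p p₀ ≤ d p s := Measure.ae_ae_of_ae_prod hmin
  have hswap : ∀ᵐ s ∂Q, ∀ᵐ r ∂Q, s ∈ A → d r p₀ ≤ d r s :=
    Measure.ae_ae_of_ae_prod (Measure.measurePreserving_swap.quasiMeasurePreserving.ae hmin)
  have hirr' : ∀ᵐ q ∂Q, ∃ k, 0 < DIterAux Q d k p₀ q :=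
    hirr.mono fun q ⟨n, _, hn⟩ => ⟨n - 1, hn⟩
  have hsq := lintegral_mul_self_pos_of_ae_exists_DIterAux_pos hd.of_uncurry_left hirr'
  have hreach : ∀ᵐ p ∂Q, ∃ k, 0 < ∫⁻ s in A, DIterAux Q d k p s ∂Q := by
    filter_upwards [ae_DIterAux_le_of_minorization hfib hswap, hirr'] with p hp ⟨k, hk⟩
    refine ⟨k, (ENNReal.mul_pos (hk.trans_eq (DIterAux_comm hd hsymm k p₀ p)).ne'
      hApos.ne').trans_le ?_⟩
    exact (setLIntegral_const A _).symm.trans_le (setLIntegral_mono_ae' hA (hp k))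
  filter_upwards [Measure.quasiMeasurePreserving_fst.ae hreach,
    Measure.quasiMeasurePreserving_snd.ae hreach] with ⟨p, q⟩ ⟨k, hk⟩ ⟨m, hm⟩
  exact ⟨k + m + 4, by omega, DIterAux_pos_of_setLIntegral_pos hd hsymm hA hfib hsq hk hm⟩
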